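/- Let (K, v) be a separably closed valued field of characteristic p > 0 with valuation ring O and value group Γ = v(K^×). Let r(x) = ∑_{i=0}^{d} a_i·x^{p^i} be an additive polynomial with all a_i ∈ O, a_0 ≠ 0, and min_i v(a_i) = 0. Let b, b_1 ∈ K, let δ ∈ Γ, and let δ' ∈ Γ be such that p·Υ(r, δ') ≥ δ. Then there exists u ∈ K with r(u) = b and v(u^p − b_1) ≥ δ if and only if there exists u ∈ K with v(r(u) − b) ≥ δ' and v(u^p − b_1) ≥ δ. -/

import Mathlib

/-- A valuation on a field `K` with values in the linearly ordered abelian group `Γ`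
(together with `∞ = ⊤`), surjective onto `Γ`, i.e. `Γ = v(K^×)`. -/
structure ValuedFieldAux (K : Type*) [Field K] (Γ : Type*)
    [AddCommGroup Γ] [LinearOrder Γ] [IsOrderedAddMonoid Γ] where
  v : K → WithTop Γ
  v_eq_top_iff : ∀ x : K, v x = ⊤ ↔ x = 0
  v_mul : ∀ x y : K, v (x * y) = v x + v y
  v_add : ∀ x y : K, min (v x) (v y) ≤ v (x + y)
  v_surj : ∀ γ : Γ, ∃ x : K, v x = (γ : WithTop Γ)

/-!
If `u` solves the approximate system, it suffices to find `ε` with `r(ε) = b - r(u)` and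
`v(ε) ≥ μ'`: then `u + ε` solves the exact system, since `r` is additive and
`v(ε^p) ≥ p·μ' ≥ δ`. Because `a₀ ≠ 0`, the polynomial `r - c` is separable, so it splits over
the separably closed field `K`. For its root `ε` of maximal valuation, Vieta's formulas give the
Newton polygon inequality `v(c) ≤ p^i·v(ε) + v(aᵢ)` for every `i`; at an index `i` where
`δ' = p^i·μ' + v(aᵢ)`, the hypothesis `δ' ≤ v(c)` then forces `μ' ≤ v(ε)`.
-/

open Polynomial Finset

namespace ValuedFieldAux

variable {K : Type*} [Field K] {Γ : Type*} [AddCommGroup Γ] [LinearOrder Γ]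
  [IsOrderedAddMonoid Γ] (vf : ValuedFieldAux K Γ)

theorem v_one : vf.v 1 = 0 := by
  obtain ⟨g, hg⟩ := WithTop.ne_top_iff_exists.mp (mt (vf.v_eq_top_iff 1).mp one_ne_zero)
  have h := vf.v_mul 1 1
  rw [mul_one, ← hg, ← WithTop.coe_add, WithTop.coe_inj, left_eq_add] at h
  rw [← hg, h, WithTop.coe_zero]

def toAddValuation : AddValuation K (WithTop Γ) :=
  AddValuation.of vf.v ((vf.v_eq_top_iff 0).mpr rfl) vf.v_one vf.v_add vf.v_mul

@[simp]
theorem toAddValuation_apply (x : K) : vf.toAddValuation x = vf.v x := rfl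

end ValuedFieldAux

namespace AddValuation

variable {K Γ₀ : Type*} [Field K] [LinearOrderedAddCommMonoidWithTop Γ₀]
  (v : AddValuation K Γ₀)

theorem map_multiset_prod (s : Multiset K) : v s.prod = (s.map v).sum := by
  induction s using Multiset.induction_on with
  | empty => simp
  | cons x s ih => simp [ih]

theorem le_add_map_multiset_sum {s : Multiset K} {c g : Γ₀} (h : ∀ x ∈ s, g ≤ c + v x) :
    g ≤ c + v s.sum := by
  induction s using Multiset.induction_on with
  | empty => simp
  | cons x s ih =>
    rw [Multiset.sum_cons]
    calc g ≤ min (c + v x) (c + v s.sum) :=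
          le_min (h x (Multiset.mem_cons_self x s))
            (ih fun y hy => h y (Multiset.mem_cons_of_mem hy))
      _ = c + min (v x) (v s.sum) := min_add_add_left c _ _
      _ ≤ c + v (x + s.sum) := by gcongr; exact v.map_add _ _

theorem map_multiset_prod_le_card_nsmul {s : Multiset K} {γ : Γ₀}
    (h : ∀ x ∈ s, v x ≤ γ) :
    v s.prod ≤ Multiset.card s • γ := by
  rw [map_multiset_prod, ← Multiset.card_map v s]
  exact Multiset.sum_le_card_nsmul _ γ (by simpa using h)

theorem map_multiset_prod_le_nsmul_add_map_esymm {s : Multiset K} {γ : Γ₀}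
    (h : ∀ x ∈ s, v x ≤ γ) {k : ℕ} (hk : k ≤ Multiset.card s) :
    v s.prod ≤ k • γ + v (s.esymm (Multiset.card s - k)) := by
  classical
  refine v.le_add_map_multiset_sum fun x hx => ?_
  obtain ⟨t, ht, rfl⟩ := Multiset.mem_map.mp hx
  obtain ⟨hts, htcard⟩ := Multiset.mem_powersetCard.mp ht
  have hcard : Multiset.card (s - t) = k := by
    rw [Multiset.card_sub hts, htcard]; omega
  calc v s.prod = v (s - t).prod + v t.prod := by
        rw [← map_mul, ← Multiset.prod_add, tsub_add_cancel_of_le hts]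
    _ ≤ k • γ + v t.prod := by
        gcongr
        exact hcard ▸ v.map_multiset_prod_le_card_nsmul fun y hy =>
          h y (Multiset.mem_of_le (Multiset.sub_le_self s t) hy)

theorem map_coeff_zero_le_nsmul_add_map_coeff {f : K[X]} (hf : f.Splits) {γ : Γ₀}
    (h : ∀ x ∈ f.roots, v x ≤ γ) (k : ℕ) :
    v (f.coeff 0) ≤ k • γ + v (f.coeff k) := by
  rcases le_or_gt k f.natDegree with hk | hk
  · have hvieta := v.map_multiset_prod_le_nsmul_add_map_esymm h
      (hf.natDegree_eq_card_roots ▸ hk)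
    rw [hf.coeff_zero_eq_leadingCoeff_mul_prod_roots, coeff_eq_esymm_roots_of_splits hf hk,
      hf.natDegree_eq_card_roots]
    simp only [map_mul, map_pow, map_neg, map_one, nsmul_zero, zero_add, add_zero]
    rw [add_left_comm]
    gcongr
  · rw [coeff_eq_zero_of_natDegree_lt hk, map_zero, add_top]
    exact le_top

end AddValuation

theorem WithTop.coe_le_of_nsmul_le_nsmul {Γ : Type*} [AddCommMonoid Γ] [LinearOrder Γ]
    [IsOrderedCancelAddMonoid Γ] {n : ℕ} (hn : n ≠ 0) {μ : Γ} {w : WithTop Γ}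
    (h : n • (μ : WithTop Γ) ≤ n • w) : (μ : WithTop Γ) ≤ w := by
  induction w using WithTop.recTopCoe with
  | top => exact le_top
  | coe g =>
    rw [← WithTop.coe_nsmul, ← WithTop.coe_nsmul, WithTop.coe_le_coe] at h
    exact WithTop.coe_le_coe.mpr (le_of_nsmul_le_nsmul_right hn h)

section AdditivePolynomial

variable {K : Type*} [Field K] (p d : ℕ) (a : ℕ → K)

noncomputable def additivePolynomial : K[X] :=
  ∑ i ∈ range (d + 1), C (a i) * X ^ p ^ i

theorem eval_additivePolynomial (x : K) :
    (additivePolynomial p d a).eval x = ∑ i ∈ range (d + 1), a i * x ^ p ^ i := by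
  simp [additivePolynomial, eval_finsetSum]

variable {p d a}

theorem coeff_additivePolynomial_zero (hp : 0 < p) : (additivePolynomial p d a).coeff 0 = 0 := by
  simp [additivePolynomial, coeff_X_pow, (pow_pos hp _).ne]

theorem coeff_additivePolynomial_pow (hp : 1 < p) {i : ℕ} (hi : i ≤ d) :
    (additivePolynomial p d a).coeff (p ^ i) = a i := by
  simp [additivePolynomial, coeff_X_pow, Nat.pow_right_inj hp, hi]

variable [CharP K p]

theorem derivative_additivePolynomial :
    derivative (additivePolynomial p d a) = C (a 0) := by
  rw [additivePolynomial, derivative_sum, Finset.sum_eq_single 0]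
  · simp
  · intro i _ hi
    rw [derivative_C_mul_X_pow, Nat.cast_pow, CharP.cast_eq_zero, zero_pow hi, mul_zero,
      map_zero, zero_mul]
  · simp

theorem separable_additivePolynomial_sub_C (ha0 : a 0 ≠ 0) (c : K) :
    (additivePolynomial p d a - C c).Separable := by
  rw [separable_def, derivative_sub, derivative_C, sub_zero, derivative_additivePolynomial]
  exact ⟨0, C (a 0)⁻¹, by rw [zero_mul, zero_add, ← C_mul, inv_mul_cancel₀ ha0, C_1]⟩

theorem eval_additivePolynomial_add [Fact p.Prime] (x y : K) :
    (additivePolynomial p d a).eval (x + y) =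
      (additivePolynomial p d a).eval x + (additivePolynomial p d a).eval y := by
  simp only [eval_additivePolynomial, add_pow_char_pow, mul_add, sum_add_distrib]

variable [IsSepClosed K]

theorem exists_eval_additivePolynomial_eq_and_map_le {Γ₀ : Type*}
    [LinearOrderedAddCommMonoidWithTop Γ₀] (hp : 1 < p) (v : AddValuation K Γ₀)
    (ha0 : a 0 ≠ 0) (c : K) : ∃ ε, (additivePolynomial p d a).eval ε = c ∧
      ∀ i ≤ d, v c ≤ p ^ i • v ε + v (a i) := by
  classical
  set f := additivePolynomial p d a - C c
  have hsep : f.Separable := separable_additivePolynomial_sub_C ha0 c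
  have hcoeff : ∀ i ≤ d, f.coeff (p ^ i) = a i := fun i hi => by
    rw [coeff_sub, coeff_C, if_neg (pow_pos (zero_lt_one.trans hp) i).ne', sub_zero,
      coeff_additivePolynomial_pow hp hi]
  have hdeg : f.degree ≠ 0 := fun h => ha0 <| by
    rw [← hcoeff 0 d.zero_le, pow_zero, coeff_eq_zero_of_degree_lt (by rw [h]; exact zero_lt_one)]
  obtain ⟨x, hx⟩ := IsSepClosed.exists_root f hdeg hsep
  obtain ⟨ε, hε, hmax⟩ := f.roots.toFinset.exists_max_image v
    ⟨x, Multiset.mem_toFinset.mpr ((mem_roots hsep.ne_zero).mpr hx)⟩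
  refine ⟨ε, ?_, fun i hi => ?_⟩
  · have hroot := isRoot_of_mem_roots (Multiset.mem_toFinset.mp hε)
    rwa [IsRoot, eval_sub, eval_C, sub_eq_zero] at hroot
  have hnewton := v.map_coeff_zero_le_nsmul_add_map_coeff (IsSepClosed.splits_of_separable f hsep)
    (fun y hy => hmax y (Multiset.mem_toFinset.mpr hy)) (p ^ i)
  rwa [hcoeff i hi, coeff_sub, coeff_additivePolynomial_zero (zero_lt_one.trans hp), coeff_C_zero,
    zero_sub, AddValuation.map_neg] at hnewton

theorem exists_eval_additivePolynomial_eq_of_le {Γ : Type*} [AddCommGroup Γ] [LinearOrder Γ]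
    [IsOrderedAddMonoid Γ] (hp : 1 < p) (v : AddValuation K (WithTop Γ)) (ha0 : a 0 ≠ 0)
    {μ : Γ} {c : K}
    (hc : (range (d + 1)).inf (fun i => p ^ i • (μ : WithTop Γ) + v (a i)) ≤ v c) :
    ∃ ε, (additivePolynomial p d a).eval ε = c ∧ (μ : WithTop Γ) ≤ v ε := by
  obtain ⟨ε, hε, hnewton⟩ := exists_eval_additivePolynomial_eq_and_map_le hp v ha0 c
  refine ⟨ε, hε, ?_⟩
  obtain ⟨i, hi, hinf⟩ := exists_mem_eq_inf (range (d + 1)) nonempty_range_add_one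
    (fun i => p ^ i • (μ : WithTop Γ) + v (a i))
  have hvai : v (a i) ≠ ⊤ := fun htop => by
    have h0 := hinf ▸ inf_le (f := fun i => p ^ i • (μ : WithTop Γ) + v (a i))
      (mem_range.mpr d.succ_pos)
    simp [htop, ha0] at h0
  refine WithTop.coe_le_of_nsmul_le_nsmul (pow_pos (zero_lt_one.trans hp) i).ne' ?_
  exact (WithTop.add_le_add_iff_right hvai).mp
    (hinf ▸ hc.trans (hnewton i (Nat.lt_succ_iff.mp (mem_range.mp hi))))

end AdditivePolynomial

theorem stmt_15_general (p : ℕ) (hp : p.Prime) (K : Type*) [Field K] [CharP K p] [IsSepClosed K]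
    (Γ : Type*) [AddCommGroup Γ] [LinearOrder Γ] [IsOrderedAddMonoid Γ] (vf : ValuedFieldAux K Γ)
    (d : ℕ) (a : ℕ → K) (ha0 : a 0 ≠ 0)
    (b b₁ : K) (δ δ' μ' : Γ)
    (hμ' : (δ' : WithTop Γ) = (Finset.range (d + 1)).inf
      (fun i => p ^ i • (μ' : WithTop Γ) + vf.v (a i)))
    (hδ : δ ≤ p • μ') :
    (∃ u : K, (∑ i ∈ Finset.range (d + 1), a i * u ^ (p ^ i)) = b ∧
        (δ : WithTop Γ) ≤ vf.v (u ^ p - b₁)) ↔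
    (∃ u : K,
        (δ' : WithTop Γ) ≤ vf.v ((∑ i ∈ Finset.range (d + 1), a i * u ^ (p ^ i)) - b) ∧
        (δ : WithTop Γ) ≤ vf.v (u ^ p - b₁)) := by
  have := Fact.mk hp
  set v := vf.toAddValuation
  simp only [← eval_additivePolynomial, ← vf.toAddValuation_apply] at hμ' ⊢
  constructor
  · rintro ⟨u, hu, hδu⟩
    exact ⟨u, by simp [hu], hδu⟩
  · rintro ⟨u, hr, hδu⟩
    obtain ⟨ε, hε, hμε⟩ := exists_eval_additivePolynomial_eq_of_le hp.one_lt v ha0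
      (c := b - (additivePolynomial p d a).eval u) (by rwa [← hμ', AddValuation.map_sub_swap])
    refine ⟨u + ε, by rw [eval_additivePolynomial_add, hε, add_sub_cancel], ?_⟩
    rw [add_pow_char, add_sub_right_comm]
    refine v.map_le_add hδu ?_
    calc (δ : WithTop Γ) ≤ p • (μ' : WithTop Γ) := WithTop.coe_le_coe.mpr hδ
      _ ≤ p • v ε := nsmul_le_nsmul_right hμε p
      _ = v (ε ^ p) := (v.map_pow ε p).symm

/-- Let `(K, v)` be a separably closed valued field of characteristic
`p > 0`. Let `r(x) = ∑_{i ≤ d} a_i·x^{p^i}` with coefficients in `O`, `a_0 ≠ 0` and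
`min_i v(a_i) = 0`. Let `b, b₁ ∈ K`, `δ ∈ Γ`, and let `δ' ∈ Γ` with `μ' = Υ(r, δ')`
(i.e. `δ' = min_i (p^i·μ' + v(a_i))`) satisfying `p·Υ(r, δ') ≥ δ`. Then the system
`r(u) = b ∧ v(u^p − b₁) ≥ δ` is solvable iff the system
`v(r(u) − b) ≥ δ' ∧ v(u^p − b₁) ≥ δ` is solvable. -/
theorem stmt_15 (p : ℕ) (hp : p.Prime) (K : Type*) [Field K] [CharP K p] [IsSepClosed K]
    (Γ : Type*) [AddCommGroup Γ] [LinearOrder Γ] [IsOrderedAddMonoid Γ] (vf : ValuedFieldAux K Γ)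
    (d : ℕ) (a : ℕ → K)
    (ha : ∀ i ≤ d, 0 ≤ vf.v (a i)) (ha0 : a 0 ≠ 0)
    (hamin : (Finset.range (d + 1)).inf (fun i => vf.v (a i)) = 0)
    (b b₁ : K) (δ δ' μ' : Γ)
    (hμ' : (δ' : WithTop Γ) = (Finset.range (d + 1)).inf
      (fun i => p ^ i • (μ' : WithTop Γ) + vf.v (a i)))
    (hδ : δ ≤ p • μ') :
    (∃ u : K, (∑ i ∈ Finset.range (d + 1), a i * u ^ (p ^ i)) = b ∧
        (δ : WithTop Γ) ≤ vf.v (u ^ p - b₁)) ↔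
    (∃ u : K,
        (δ' : WithTop Γ) ≤ vf.v ((∑ i ∈ Finset.range (d + 1), a i * u ^ (p ^ i)) - b) ∧
        (δ : WithTop Γ) ≤ vf.v (u ^ p - b₁)) :=
  stmt_15_general p hp K Γ vf d a ha0 b b₁ δ δ' μ' hμ' hδ
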